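/- arXiv:1910.07998 — 3 statements merged into one kernel-verified Lean document; each statement's English description precedes it below -/
import Mathlib

section
/- Borrowing lemma (one step): Let U = V_T ∘ ... ∘ V_1 be a product of unitaries on a tensor product H = (⊗_i A_i) ⊗ (⊗_i B_i) of physical qudits A_i and ancilla qudits B_i. Fix sites j ≠ i and an interval [t_min, t_max] ⊆ {1,...,T} such that (1) every V_t with t ∈ [t_min, t_max] acts trivially on A_i, (2) every V_t with t ∉ [t_min, t_max] acts trivially on B_j, and (3) the partial product V_{t_max} ∘ ... ∘ V_{t_min} acts trivially on B_j (as U does, restricted). Let σ be the swap of A_i and B_j. Then replacing each V_t for t ∈ [t_min, t_max] by σ V_t σ yields a product equal to U. -/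
/-- Borrowing lemma, one step: Let `U = V_T ∘ ... ∘ V_1` be a product of
unitaries. `TrivA g` (resp. `TrivB g`) means `g` acts trivially on the physical qudit `A_i`
(resp. the ancilla qudit `B_j`); `σ` is the swap of `A_i` and `B_j`, so `σ² = 1` and `σ`
commutes with any unitary acting trivially on both `A_i` and `B_j`. If every `V_t` with
`t ∈ [t_min, t_max]` acts trivially on `A_i`, every `V_t` outside the interval acts trivially
on `B_j`, and the partial product `V_{t_max} ∘ ... ∘ V_{t_min}` acts trivially on `B_j`, then
replacing each `V_t` on the interval by `σ V_t σ` leaves the total product unchanged. -/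
theorem borrowing_one_step
    {G : Type*} [Group G]
    (σ : G) (hσ : σ * σ = 1)
    (TrivA TrivB : G → Prop)
    (hA1 : TrivA 1)
    (hAmul : ∀ g h : G, TrivA g → TrivA h → TrivA (g * h))
    (hswap : ∀ g : G, TrivA g → TrivB g → Commute σ g)
    (T tmin tmax : ℕ) (h0 : 1 ≤ tmin) (h1 : tmin ≤ tmax) (h2 : tmax ≤ T)
    (V : ℕ → G)
    (hAin : ∀ t, tmin ≤ t → t ≤ tmax → TrivA (V t))
    (hBout : ∀ t, 1 ≤ t → t ≤ T → ¬ (tmin ≤ t ∧ t ≤ tmax) → TrivB (V t))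
    (hBmid : TrivB (((List.range (tmax + 1 - tmin)).map fun s => V (tmax - s)).prod)) :
    (((List.range T).map fun s =>
        (if tmin ≤ T - s ∧ T - s ≤ tmax then σ * V (T - s) * σ else V (T - s))).prod)
      = ((List.range T).map fun s => V (T - s)).prod := by
  have hσ' : ∀ x : G, σ * (σ * x) = x := by
    intro x; rw [← mul_assoc, hσ, one_mul]
  have conjprod : ∀ l : List G, ((l.map fun g => σ * g * σ).prod) = σ * l.prod * σ := by
    intro l
    induction l with
    | nil => simp [← hσ, mul_assoc]
    | cons g l ih =>
        rw [List.map_cons, List.prod_cons, List.prod_cons, ih]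
        simp only [mul_assoc, hσ']
  have trivprod : ∀ l : List G, (∀ g ∈ l, TrivA g) → TrivA l.prod := by
    intro l
    induction l with
    | nil => intro _; simpa using hA1
    | cons g l ih =>
        intro h; rw [List.prod_cons]
        exact hAmul _ _ (h g (by simp)) (ih fun x hx => h x (by simp [hx]))
  set a := T - tmax with ha
  set b := tmax + 1 - tmin with hb
  set c := tmin - 1 with hc
  have hT : T = a + b + c := by omega
  have hsplit : List.range T
      = List.range a ++ (List.range b).map (a + ·) ++ (List.range c).map ((a + b) + ·) := by
    rw [hT, List.range_add, List.range_add]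
  set f : ℕ → G := fun s =>
    (if tmin ≤ T - s ∧ T - s ≤ tmax then σ * V (T - s) * σ else V (T - s)) with hf
  have hpre : ∀ s ∈ List.range a, f s = V (T - s) := by
    intro s hs
    rw [List.mem_range] at hs
    rw [hf]; simp only
    rw [if_neg (by omega)]
  have hmidv : ∀ x ∈ List.range b, f (a + x) = σ * V (tmax - x) * σ := by
    intro x hx
    rw [List.mem_range] at hx
    rw [hf]; simp only
    rw [if_pos (by omega), show T - (a + x) = tmax - x by omega]
  have hmidv' : ∀ x ∈ List.range b, V (T - (a + x)) = V (tmax - x) := by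
    intro x hx
    rw [List.mem_range] at hx
    rw [show T - (a + x) = tmax - x by omega]
  have hsuf : ∀ x ∈ List.range c, f ((a + b) + x) = V (T - ((a + b) + x)) := by
    intro x hx
    rw [List.mem_range] at hx
    rw [hf]; simp only
    rw [if_neg (by omega)]
  have hM : TrivA (((List.range b).map fun x => V (tmax - x)).prod) := by
    apply trivprod
    intro g hg
    rw [List.mem_map] at hg
    obtain ⟨x, hx, rfl⟩ := hg
    rw [List.mem_range] at hx
    exact hAin _ (by omega) (by omega)
  have hcomm : Commute σ (((List.range b).map fun x => V (tmax - x)).prod) :=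
    hswap _ hM hBmid
  rw [hsplit]
  simp only [List.map_append, List.prod_append, List.map_map, Function.comp_def]
  rw [List.map_congr_left hpre, List.map_congr_left hmidv, List.map_congr_left hsuf,
      List.map_congr_left hmidv']
  congr 1
  congr 1
  have : ((List.range b).map fun x => σ * V (tmax - x) * σ)
      = (((List.range b).map fun x => V (tmax - x)).map fun g => σ * g * σ) := by
    rw [List.map_map]; rfl
  rw [this, conjprod]
  rw [hcomm.eq, mul_assoc, hσ, mul_one]
end

section
/- For every d ≥ 1 and every ε, ε' > 0, there exists a smooth map p : [0,1] → [0,1] (a 1-dimensional pleating: a composition of finitely many maps each locally a diffeomorphism or a fold) such that for all x₁, x₂ ∈ [0,1] with |x₁ − x₂| ≥ ε', the arclength of the graph of p between (x₁, p(x₁)) and (x₂, p(x₂)) is at least (1/ε)·|x₁ − x₂|. -/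
open intervalIntegral

/-- 1D manifold pleating: For every `d ≥ 1` and every `ε, ε' > 0` there is a
smooth map `p : [0,1] → [0,1]` whose singularities are at worst folds (critical points are
nondegenerate, i.e. `p` is locally a diffeomorphism or a fold), such that whenever
`|x₁ − x₂| ≥ ε'`, the arclength of the graph of `p` between `(x₁, p(x₁))` and `(x₂, p(x₂))`
is at least `(1/ε)·|x₁ − x₂|`. -/
theorem one_dim_pleating (d : ℕ) (hd : 1 ≤ d) (ε ε' : ℝ) (hε : 0 < ε) (hε' : 0 < ε') :
    ∃ p : ℝ → ℝ, ContDiff ℝ (⊤ : ℕ∞) p ∧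
      Set.MapsTo p (Set.Icc 0 1) (Set.Icc 0 1) ∧
      (∀ x ∈ Set.Icc (0 : ℝ) 1, deriv p x = 0 → deriv (deriv p) x ≠ 0) ∧
      ∀ x₁ x₂ : ℝ, x₁ ∈ Set.Icc (0 : ℝ) 1 → x₂ ∈ Set.Icc (0 : ℝ) 1 → x₁ ≤ x₂ →
        ε' ≤ x₂ - x₁ →
        (1 / ε) * (x₂ - x₁) ≤ ∫ t in x₁..x₂, Real.sqrt (1 + (deriv p t) ^ 2) := by
  set ω : ℝ := 8 / ε + 2 / ε' with hωdef
  have hω0 : 0 < ω := by positivity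
  set p : ℝ → ℝ := fun x => 1 / 2 + Real.sin (ω * x) / 2 with hpdef
  have hd1 : ∀ x : ℝ, HasDerivAt p (ω / 2 * Real.cos (ω * x)) x := by
    intro x
    have h1 : HasDerivAt (fun y : ℝ => ω * y) ω x := by
      simpa using (hasDerivAt_id x).const_mul ω
    have h2 := (h1.sin.div_const 2).const_add (1 / 2 : ℝ)
    exact h2.congr_deriv (by ring)
  have hderiv : deriv p = fun x => ω / 2 * Real.cos (ω * x) :=
    funext fun x => (hd1 x).deriv
  refine ⟨p, ?_, ?_, ?_, ?_⟩
  · exact contDiff_const.add ((Real.contDiff_sin.comp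
      (contDiff_const.mul contDiff_id)).div_const 2)
  · intro x _
    have h1 := Real.neg_one_le_sin (ω * x)
    have h2 := Real.sin_le_one (ω * x)
    constructor <;> simp only [hpdef] <;> linarith
  · intro x _ h0
    rw [hderiv] at h0 ⊢
    have hc : Real.cos (ω * x) = 0 := by
      rcases mul_eq_zero.mp h0 with h | h
      · exact absurd h (by positivity)
      · exact h
    have h1 : HasDerivAt (fun y : ℝ => ω * y) ω x := by
      simpa using (hasDerivAt_id x).const_mul ω
    have h2 : HasDerivAt (fun y => ω / 2 * Real.cos (ω * y))
        (ω / 2 * (-Real.sin (ω * x) * ω)) x := h1.cos.const_mul (ω / 2)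
    rw [h2.deriv]
    have hs : Real.sin (ω * x) ^ 2 = 1 := by
      have := Real.sin_sq_add_cos_sq (ω * x)
      nlinarith
    intro h
    rcases mul_eq_zero.mp h with h' | h'
    · exact absurd h' (by positivity)
    · rcases mul_eq_zero.mp h' with h'' | h''
      · rw [neg_eq_zero] at h''; rw [h''] at hs; norm_num at hs
      · exact absurd h'' hω0.ne'
  · intro x₁ x₂ _ _ hle hL
    set L : ℝ := x₂ - x₁ with hLdef
    have hL0 : 0 < L := lt_of_lt_of_le hε' hL
    set G : ℝ → ℝ := fun t => t / 2 + Real.sin (ω * t) * Real.cos (ω * t) / (2 * ω)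
      with hGdef
    have hG : ∀ t : ℝ, HasDerivAt G (Real.cos (ω * t) ^ 2) t := by
      intro t
      have h1 : HasDerivAt (fun y : ℝ => ω * y) ω t := by
        simpa using (hasDerivAt_id t).const_mul ω
      have h3 := ((hasDerivAt_id t).div_const 2).add
        ((h1.sin.mul h1.cos).div_const (2 * ω))
      refine h3.congr_deriv ?_
      have hpyth := Real.sin_sq_add_cos_sq (ω * t)
      field_simp
      nlinarith [hpyth]
    have hcont : Continuous fun t => Real.cos (ω * t) ^ 2 :=
      (Real.continuous_cos.comp (continuous_const.mul continuous_id)).pow 2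
    have hint : (∫ t in x₁..x₂, Real.cos (ω * t) ^ 2) = G x₂ - G x₁ :=
      intervalIntegral.integral_eq_sub_of_hasDerivAt (fun t _ => hG t)
        (hcont.intervalIntegrable x₁ x₂)
    have hsc : ∀ t : ℝ, -(1/2 : ℝ) ≤ Real.sin (ω*t) * Real.cos (ω*t) ∧
        Real.sin (ω*t) * Real.cos (ω*t) ≤ 1/2 := by
      intro t
      have := Real.sin_sq_add_cos_sq (ω * t)
      constructor <;> nlinarith [sq_nonneg (Real.sin (ω*t) + Real.cos (ω*t)),
        sq_nonneg (Real.sin (ω*t) - Real.cos (ω*t))]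
    have hGlb : L / 2 - 1 / (2 * ω) ≤ G x₂ - G x₁ := by
      have h1 := (hsc x₁).2
      have h2 := (hsc x₂).1
      have heq : G x₂ - G x₁ = L / 2 +
          (Real.sin (ω*x₂) * Real.cos (ω*x₂) - Real.sin (ω*x₁) * Real.cos (ω*x₁)) / (2 * ω) := by
        simp only [hGdef, hLdef]; ring
      rw [heq]
      have h3 : (-1 : ℝ) / (2 * ω) ≤
          (Real.sin (ω*x₂) * Real.cos (ω*x₂) - Real.sin (ω*x₁) * Real.cos (ω*x₁)) / (2 * ω) := by
        gcongr
        linarith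
      have h4 : (-1 : ℝ) / (2 * ω) = -(1 / (2 * ω)) := by ring
      linarith [h3, h4.le]
    -- pointwise bound
    have hptw : ∀ t ∈ Set.Icc x₁ x₂,
        ω / 2 * Real.cos (ω * t) ^ 2 ≤ Real.sqrt (1 + (deriv p t) ^ 2) := by
      intro t _
      rw [hderiv]
      have hcabs : |Real.cos (ω * t)| ≤ 1 := Real.abs_cos_le_one _
      have h1 : Real.sqrt ((ω / 2 * Real.cos (ω * t)) ^ 2) ≤
          Real.sqrt (1 + (ω / 2 * Real.cos (ω * t)) ^ 2) :=
        Real.sqrt_le_sqrt (by nlinarith)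
      rw [Real.sqrt_sq_eq_abs, abs_mul, abs_of_pos (by positivity : (0:ℝ) < ω / 2)] at h1
      have h2 : Real.cos (ω * t) ^ 2 ≤ |Real.cos (ω * t)| := by
        have := abs_nonneg (Real.cos (ω * t))
        nlinarith [sq_abs (Real.cos (ω * t))]
      have h3 : ω / 2 * Real.cos (ω * t) ^ 2 ≤ ω / 2 * |Real.cos (ω * t)| := by
        gcongr
      exact le_trans h3 h1
    have hint1 : IntervalIntegrable (fun t => ω / 2 * Real.cos (ω * t) ^ 2)
        MeasureTheory.volume x₁ x₂ := (continuous_const.mul hcont).intervalIntegrable x₁ x₂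
    have hint2 : IntervalIntegrable (fun t => Real.sqrt (1 + (deriv p t) ^ 2))
        MeasureTheory.volume x₁ x₂ := by
      rw [hderiv]
      exact (Real.continuous_sqrt.comp (continuous_const.add
        ((continuous_const.mul
          (Real.continuous_cos.comp (continuous_const.mul continuous_id))).pow 2))).intervalIntegrable x₁ x₂
    have hmono : (∫ t in x₁..x₂, ω / 2 * Real.cos (ω * t) ^ 2) ≤
        ∫ t in x₁..x₂, Real.sqrt (1 + (deriv p t) ^ 2) :=
      intervalIntegral.integral_mono_on hle hint1 hint2 hptw
    have hcm : (∫ t in x₁..x₂, ω / 2 * Real.cos (ω * t) ^ 2) =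
        ω / 2 * ∫ t in x₁..x₂, Real.cos (ω * t) ^ 2 :=
      intervalIntegral.integral_const_mul _ _
    have hfin : (1 / ε) * L ≤ ω / 2 * (L / 2 - 1 / (2 * ω)) := by
      have hA : ω / 2 * (L / 2 - 1 / (2 * ω)) = ω * L / 4 - 1 / 4 := by
        field_simp; ring
      have hB : ω * L / 4 - 1 / 4 = 2 * (L / ε) + (L / ε') / 2 - 1 / 4 := by
        rw [hωdef]; ring
      have h4 : (1 : ℝ) ≤ L / ε' := (one_le_div hε').mpr hL
      have h5 : 0 < L / ε := by positivity
      have h6 : (1 / ε) * L = L / ε := by ring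
      rw [hA, hB, h6]; linarith
    calc (1 / ε) * L ≤ ω / 2 * (L / 2 - 1 / (2 * ω)) := hfin
      _ ≤ ω / 2 * (G x₂ - G x₁) :=
        mul_le_mul_of_nonneg_left hGlb (by positivity)
      _ = ∫ t in x₁..x₂, ω / 2 * Real.cos (ω * t) ^ 2 := by rw [hcm, hint]
      _ ≤ _ := hmono
end

section
/- Swap implementation of tensor-inverse: For any unitary V on a finite-dimensional Hilbert space H, the unitary V ⊗ V† on H ⊗ H equals ((V ⊗ I) ∘ SWAP ∘ (V† ⊗ I)) ∘ SWAP, where SWAP is the exchange of the two tensor factors. Consequently, for any QCA α of range R on a finite system, the automorphism α ⊗ α⁻¹ on the doubled system is conjugation by a depth-2 circuit whose gates are: (round 1) local swaps of each site with its doubled partner, (round 2) the unitary (V ⊗ I) SWAP (V† ⊗ I) — and when α has range R this conjugation structure yields gates of range O(R). -/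
open Kronecker Matrix

set_option linter.unusedSectionVars false

lemma swap_conj' {I : Type*} [Fintype I] [DecidableEq I] (S : Matrix (I × I) (I × I) ℂ)
    (hS : S = Matrix.of fun p q => if p.1 = q.2 ∧ p.2 = q.1 then 1 else 0)
    (A B : Matrix I I ℂ) : S * (A ⊗ₖ B) * S = B ⊗ₖ A := by
  subst hS
  ext ⟨i,j⟩ ⟨k,l⟩
  simp [Matrix.mul_apply, Fintype.sum_prod_type, ite_and, mul_comm]

lemma swap_sq' {I : Type*} [Fintype I] [DecidableEq I] (S : Matrix (I × I) (I × I) ℂ)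
    (hS : S = Matrix.of fun p q => if p.1 = q.2 ∧ p.2 = q.1 then 1 else 0) :
    S * S = 1 := by
  subst hS
  ext ⟨i,j⟩ ⟨k,l⟩
  simp [Matrix.mul_apply, Fintype.sum_prod_type, ite_and, Matrix.one_apply, Prod.ext_iff, and_comm]

lemma swap_herm' {I : Type*} [Fintype I] [DecidableEq I] (S : Matrix (I × I) (I × I) ℂ)
    (hS : S = Matrix.of fun p q => if p.1 = q.2 ∧ p.2 = q.1 then 1 else 0) :
    Sᴴ = S := by
  subst hS
  ext ⟨i,j⟩ ⟨k,l⟩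
  simp only [Matrix.conjTranspose_apply, Matrix.of_apply, apply_ite (star : ℂ → ℂ),
    star_one, star_zero]
  congr 1
  simp only [eq_iff_iff]; constructor <;> rintro ⟨h1, h2⟩ <;> exact ⟨h2.symm, h1.symm⟩

lemma kron_one_unitary {I : Type*} [Fintype I] [DecidableEq I]
    (A : Matrix I I ℂ) (hA : A ∈ Matrix.unitaryGroup I ℂ) :
    A ⊗ₖ (1 : Matrix I I ℂ) ∈ Matrix.unitaryGroup (I × I) ℂ := by
  rw [Matrix.mem_unitaryGroup_iff'] at hA ⊢
  rw [Matrix.star_eq_conjTranspose] at hA ⊢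
  have h1 : (A ⊗ₖ (1 : Matrix I I ℂ))ᴴ = Aᴴ ⊗ₖ (1 : Matrix I I ℂ) := by
    ext ⟨i,j⟩ ⟨k,l⟩
    simp [Matrix.conjTranspose_apply, Matrix.one_apply, apply_ite (star : ℂ → ℂ), eq_comm]
  rw [h1, ← Matrix.mul_kronecker_mul, hA, one_mul, Matrix.one_kronecker_one]

/-- swap implementation of the tensor-inverse: For any unitary `V` on a
finite-dimensional Hilbert space, `V ⊗ V† = ((V ⊗ I) · SWAP · (V† ⊗ I)) · SWAP`.  Hence
`V ⊗ V†` is a product of two unitaries (a depth-2 circuit): round 1 the swap of the two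
factors, round 2 the unitary `(V ⊗ I)·SWAP·(V† ⊗ I)`. -/
theorem tensor_inverse_is_depth_two_circuit
    {I : Type*} [Fintype I] [DecidableEq I]
    (V : Matrix I I ℂ) (hV : V ∈ Matrix.unitaryGroup I ℂ)
    (SWAP : Matrix (I × I) (I × I) ℂ)
    (hSWAP : SWAP = Matrix.of fun p q => if p.1 = q.2 ∧ p.2 = q.1 then 1 else 0) :
    V ⊗ₖ Vᴴ = ((V ⊗ₖ (1 : Matrix I I ℂ)) * SWAP * (Vᴴ ⊗ₖ (1 : Matrix I I ℂ))) * SWAP ∧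
    SWAP ∈ Matrix.unitaryGroup (I × I) ℂ ∧
    ((V ⊗ₖ (1 : Matrix I I ℂ)) * SWAP * (Vᴴ ⊗ₖ (1 : Matrix I I ℂ)))
      ∈ Matrix.unitaryGroup (I × I) ℂ := by
  have hS : SWAP ∈ Matrix.unitaryGroup (I × I) ℂ := by
    rw [Matrix.mem_unitaryGroup_iff]
    rw [Matrix.star_eq_conjTranspose, swap_herm' SWAP hSWAP, swap_sq' SWAP hSWAP]
  have hVH : Vᴴ ∈ Matrix.unitaryGroup I ℂ := by
    rw [← Matrix.star_eq_conjTranspose]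
    exact Unitary.star_mem hV
  refine ⟨?_, hS, mul_mem (mul_mem (kron_one_unitary V hV) hS) (kron_one_unitary Vᴴ hVH)⟩
  symm
  calc (V ⊗ₖ (1 : Matrix I I ℂ)) * SWAP * (Vᴴ ⊗ₖ (1 : Matrix I I ℂ)) * SWAP
      = (V ⊗ₖ (1 : Matrix I I ℂ)) * (SWAP * (Vᴴ ⊗ₖ (1 : Matrix I I ℂ)) * SWAP) := by
        simp only [mul_assoc]
    _ = (V ⊗ₖ (1 : Matrix I I ℂ)) * ((1 : Matrix I I ℂ) ⊗ₖ Vᴴ) := by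
        rw [swap_conj' SWAP hSWAP]
    _ = V ⊗ₖ Vᴴ := by rw [← Matrix.mul_kronecker_mul, mul_one, one_mul]
end
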